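/- Let S be a binary rooted tree whose root has children subtrees S_ℓ and S_r. Then the Hasse digraph D(S) of the lattice of root ancestral configurations of S is isomorphic to the cartesian product of digraphs D̂(S_ℓ) □ D̂(S_r), where D̂(T) denotes the digraph D(T) with one new maximal vertex appended by a single edge from the old maximal vertex (and D̂ of the empty digraph is a single vertex). -/

import Mathlib

/-- Binary rooted trees (leaf labels abstracted away; leaves are identified
by their positions, encoded as lists of booleans). -/
inductive BTree : Type
  | leaf : BTree
  | node : BTree → BTree → BTree
  deriving DecidableEq

namespace BTree

/-- A position in a binary tree: a path from the root, `false` = left, `true` = right. -/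
abbrev Pos := List Bool

/-- The subtree rooted at a position (junk value `leaf` below a leaf). -/
def subtreeAt : BTree → Pos → BTree
  | t, [] => t
  | leaf, _ :: _ => leaf
  | node l _, false :: p => subtreeAt l p
  | node _ r, true :: p => subtreeAt r p

/-- `p` is a valid position (node) of the tree. -/
def isValidPos : BTree → Pos → Prop
  | _, [] => True
  | leaf, _ :: _ => False
  | node l _, false :: p => isValidPos l p
  | node _ r, true :: p => isValidPos r p

/-- The set of positions of the leaves of a tree. -/
def leafPositions : BTree → Finset Pos
  | leaf => {([] : Pos)}
  | node l r =>
      (leafPositions l).image (false :: ·) ∪ (leafPositions r).image (true :: ·)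

/-- The number of leaves of a tree. -/
def numLeaves (t : BTree) : ℕ := (leafPositions t).card

/-- The set of positions of the internal (non-leaf) nodes of a tree. -/
def internalPos : BTree → Finset Pos
  | leaf => ∅
  | node l r =>
      insert ([] : Pos)
        ((internalPos l).image (false :: ·) ∪ (internalPos r).image (true :: ·))

/-- A root ancestral configuration of `S`: an antichain of non-root nodes of `S`
whose descendant-leaf sets partition the leaf set, i.e. a set of valid non-root
positions such that every leaf position has exactly one weak ancestor in the set. -/
def IsConfig (S : BTree) (A : Finset Pos) : Prop :=
  (∀ p ∈ A, isValidPos S p ∧ p ≠ []) ∧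
  ∀ q ∈ leafPositions S, ∃! p, p ∈ A ∧ p <+: q

/-- The partial order on configurations: `ConfigLE A B` (that is, `A ≺ B`) iff `B`
is obtained from `A` by coalescing some (possibly no) pairs of lineages;
equivalently, every node of `A` is a weak descendant of some node of `B`. -/
def ConfigLE (A B : Finset Pos) : Prop :=
  ∀ p ∈ A, ∃ q ∈ B, q <+: p

/-- The covering relation on root ancestral configurations of `S`. -/
def Covers (S : BTree) (A B : Finset Pos) : Prop :=
  IsConfig S A ∧ IsConfig S B ∧ ConfigLE A B ∧ A ≠ B ∧
  ∀ C, IsConfig S C → ConfigLE A C → ConfigLE C B → C = A ∨ C = B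

/-- The maximal root configuration: the two children of the root. -/
def rootConfig : Finset Pos := {[false], [true]}

/-- The number of root ancestral configurations of `S`. -/
noncomputable def numConfigs (S : BTree) : ℕ := Nat.card {A : Finset Pos // IsConfig S A}

/-- A labeled history of `S`: a linear ordering of the internal nodes of `S`
in which every internal node appears after all of its internal descendants. -/
def IsLabHist (S : BTree) (L : List Pos) : Prop :=
  L.Nodup ∧ (∀ p, p ∈ L ↔ p ∈ internalPos S) ∧
  ∀ i j : Fin L.length, L.get i <+: L.get j → (j : ℕ) ≤ (i : ℕ)

/-- The number of labeled histories of `S`. -/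
noncomputable def numHist (S : BTree) : ℕ := Nat.card {L : List Pos // IsLabHist S L}

/-- The caterpillar tree on `n` leaves (`caterpillar 1` is a single leaf). -/
def caterpillar : ℕ → BTree
  | 0 => leaf
  | 1 => leaf
  | n + 2 => node (caterpillar (n + 1)) leaf

end BTree

open BTree

/-- The edge relation of the digraph `D̂(T)`: the covering digraph of the lattice of
root ancestral configurations of `T`, with one new maximal vertex (`none`) appended
by a single edge from the old maximal vertex (the greatest configuration). -/
def hatEdge (T : BTree) :
    Option {A : Finset Pos // IsConfig T A} →
    Option {A : Finset Pos // IsConfig T A} → Prop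
  | some a, some b => Covers T a.val b.val
  | some a, none => ∀ B, IsConfig T B → ConfigLE B a.val
  | none, _ => False

/-!
A configuration of `node l r` is a configuration on each side of the root, where a side may
also consist of the child itself.  Reading "the child itself" as a new top element, this is an
order isomorphism between the configurations of `node l r` and
`WithTop (configurations of l) × WithTop (configurations of r)`. Order isomorphisms preserve
covering pairs, covering pairs in a product move in exactly one coordinate, and `hatEdge` is
the covering relation of `WithTop`, because a maximal configuration is the greatest one.
-/

namespace BTree

open List

theorem isValidPos_nil (T : BTree) : isValidPos T [] := by
  cases T <;> trivial

theorem isValidPos_node_cons {l r : BTree} {b : Bool} {p : Pos} :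
    isValidPos (node l r) (b :: p) ↔ isValidPos (cond b r l) p := by
  cases b <;> rfl

theorem cons_mem_leafPositions_node {l r : BTree} {b : Bool} {q : Pos} :
    b :: q ∈ leafPositions (node l r) ↔ q ∈ leafPositions (cond b r l) := by
  cases b <;> simp [leafPositions]

theorem forall_mem_leafPositions_node {l r : BTree} {P : Pos → Prop} :
    (∀ q ∈ leafPositions (node l r), P q) ↔
      ∀ b, ∀ q ∈ leafPositions (cond b r l), P (b :: q) := by
  simp [leafPositions, Bool.forall_bool, or_imp, forall_and]

theorem exists_mem_leafPositions_prefix {T : BTree} {p : Pos} (hp : isValidPos T p) :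
    ∃ q ∈ leafPositions T, p <+: q := by
  induction T generalizing p with
  | leaf =>
    cases p with
    | nil => exact ⟨[], by simp [leafPositions], prefix_rfl⟩
    | cons b p => exact hp.elim
  | node l r ihl ihr =>
    cases p with
    | nil =>
      obtain ⟨q, hq, -⟩ := ihl (isValidPos_nil l)
      exact ⟨false :: q, cons_mem_leafPositions_node.2 hq, nil_prefix⟩
    | cons b p =>
      obtain ⟨q, hq, hpq⟩ : ∃ q ∈ leafPositions (cond b r l), p <+: q := by
        cases b
        exacts [ihl hp, ihr hp]
      exact ⟨b :: q, cons_mem_leafPositions_node.2 hq, cons_prefix_cons.2 ⟨rfl, hpq⟩⟩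

/-- Like `IsConfig`, but the root may occur, in which case `A = {[]}`. -/
def IsAncConfig (T : BTree) (A : Finset Pos) : Prop :=
  (∀ p ∈ A, isValidPos T p) ∧ ∀ q ∈ leafPositions T, ∃! p, p ∈ A ∧ p <+: q

theorem isConfig_iff {T : BTree} {A : Finset Pos} :
    IsConfig T A ↔ IsAncConfig T A ∧ [] ∉ A := by
  constructor
  · rintro ⟨hvalid, hleaves⟩
    exact ⟨⟨fun p hp => (hvalid p hp).1, hleaves⟩, fun h => (hvalid _ h).2 rfl⟩
  · rintro ⟨⟨hvalid, hleaves⟩, hnil⟩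
    exact ⟨fun p hp => ⟨hvalid p hp, ne_of_mem_of_not_mem hp hnil⟩, hleaves⟩

theorem not_isConfig_leaf (A : Finset Pos) : ¬IsConfig leaf A := by
  rintro ⟨hvalid, hleaves⟩
  obtain ⟨p, ⟨hp, hpnil⟩, -⟩ := hleaves [] (by simp [leafPositions])
  exact (hvalid p hp).2 (prefix_nil.1 hpnil)

namespace IsAncConfig

variable {T : BTree} {A : Finset Pos}

theorem eq_of_prefix (hA : IsAncConfig T A) {p q : Pos} (hp : p ∈ A) (hq : q ∈ A)
    (hpq : p <+: q) : p = q := by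
  obtain ⟨q', hq', hqq'⟩ := exists_mem_leafPositions_prefix (hA.1 q hq)
  exact (hA.2 q' hq').unique ⟨hp, hpq.trans hqq'⟩ ⟨hq, hqq'⟩

theorem eq_singleton_nil (hA : IsAncConfig T A) (h : [] ∈ A) : A = {[]} :=
  Finset.eq_singleton_iff_unique_mem.2 ⟨h, fun _ hp => (hA.eq_of_prefix h hp nil_prefix).symm⟩

theorem subset_of_configLE (hA : IsAncConfig T A) {B : Finset Pos} (hAB : ConfigLE A B)
    (hBA : ConfigLE B A) : A ⊆ B := by
  intro p hp
  obtain ⟨q, hq, hqp⟩ := hAB p hp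
  obtain ⟨p', hp', hp'q⟩ := hBA q hq
  obtain rfl := hA.eq_of_prefix hp' hp (hp'q.trans hqp)
  rwa [hqp.sublist.antisymm hp'q.sublist] at hq

end IsAncConfig

theorem configLE_refl (A : Finset Pos) : ConfigLE A A :=
  fun p hp => ⟨p, hp, prefix_rfl⟩

theorem ConfigLE.trans {A B C : Finset Pos} (hAB : ConfigLE A B) (hBC : ConfigLE B C) :
    ConfigLE A C := by
  intro p hp
  obtain ⟨q, hq, hqp⟩ := hAB p hp
  obtain ⟨s, hs, hsq⟩ := hBC q hq
  exact ⟨s, hs, hsq.trans hqp⟩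

/-- A type synonym, so that `≤` is `ConfigLE` rather than the subset order of subtypes. -/
def Cfg (T : BTree) : Type := {A : Finset Pos // IsConfig T A}

instance (T : BTree) : PartialOrder (Cfg T) where
  le A B := ConfigLE A.1 B.1
  le_refl A := configLE_refl A.1
  le_trans _ _ _ := ConfigLE.trans
  le_antisymm A B hAB hBA := Subtype.ext <| subset_antisymm
    ((isConfig_iff.1 A.2).1.subset_of_configLE hAB hBA)
    ((isConfig_iff.1 B.2).1.subset_of_configLE hBA hAB)

theorem covers_iff_covBy {S : BTree} {X Y : Cfg S} : Covers S X.1 Y.1 ↔ X ⋖ Y := by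
  rw [covBy_iff_lt_and_eq_or_eq, lt_iff_le_and_ne]
  constructor
  · rintro ⟨-, -, hle, hne, hbetween⟩
    exact ⟨⟨hle, fun h => hne (congrArg Subtype.val h)⟩,
      fun C h₁ h₂ => (hbetween C.1 C.2 h₁ h₂).imp Subtype.ext Subtype.ext⟩
  · rintro ⟨⟨hle, hne⟩, hbetween⟩
    exact ⟨X.2, Y.2, hle, fun h => hne (Subtype.ext h), fun C hC h₁ h₂ =>
      (hbetween ⟨C, hC⟩ h₁ h₂).imp (congrArg Subtype.val) (congrArg Subtype.val)⟩

namespace Cfg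

variable {T : BTree}

/-- `⊤` stands for the configuration `{[]}` consisting of the root alone. -/
def carrier : WithTop (Cfg T) → Finset Pos
  | ⊤ => {[]}
  | (A : Cfg T) => A.1

theorem isAncConfig_carrier (x : WithTop (Cfg T)) : IsAncConfig T (carrier x) := by
  cases x with
  | top =>
    refine ⟨fun p hp => ?_, fun _ _ => ⟨[], ⟨Finset.mem_singleton_self _, nil_prefix⟩,
      fun p hp => ?_⟩⟩
    · rw [Finset.mem_singleton.1 hp]
      exact isValidPos_nil T
    · exact Finset.mem_singleton.1 hp.1
  | coe A => exact (isConfig_iff.1 A.2).1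

theorem exists_carrier_eq {A : Finset Pos} (hA : IsAncConfig T A) :
    ∃ x : WithTop (Cfg T), carrier x = A := by
  by_cases hnil : [] ∈ A
  · exact ⟨⊤, (hA.eq_singleton_nil hnil).symm⟩
  · exact ⟨WithTop.some ⟨A, isConfig_iff.2 ⟨hA, hnil⟩⟩, rfl⟩

theorem configLE_carrier_iff {x y : WithTop (Cfg T)} :
    ConfigLE (carrier x) (carrier y) ↔ x ≤ y := by
  cases x with
  | top =>
    cases y with
    | top => exact iff_of_true (configLE_refl _) le_rfl
    | coe B =>
      refine iff_of_false (fun h => ?_) (WithTop.not_top_le_coe B)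
      obtain ⟨q, hq, hqnil⟩ := h [] (Finset.mem_singleton_self _)
      exact (isConfig_iff.1 B.2).2 (prefix_nil.1 hqnil ▸ hq)
  | coe A =>
    cases y with
    | top => exact iff_of_true (fun _ _ => ⟨[], Finset.mem_singleton_self _, nil_prefix⟩) le_top
    | coe B =>
      show A ≤ B ↔ _
      exact WithTop.coe_le_coe.symm

end Cfg

noncomputable def childPart (b : Bool) (A : Finset Pos) : Finset Pos :=
  A.preimage (b :: ·) List.cons_injective.injOn

@[simp]
theorem mem_childPart {b : Bool} {A : Finset Pos} {p : Pos} :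
    p ∈ childPart b A ↔ b :: p ∈ A :=
  Finset.mem_preimage

section NilNotMem

variable {A B : Finset Pos}

theorem forall_mem_iff_childPart (hA : [] ∉ A) {P : Pos → Prop} :
    (∀ p ∈ A, P p) ↔ ∀ b, ∀ p ∈ childPart b A, P (b :: p) := by
  refine ⟨fun h b p hp => h _ (mem_childPart.1 hp), fun h p hp => ?_⟩
  obtain ⟨b, p, rfl⟩ := exists_cons_of_ne_nil (ne_of_mem_of_not_mem hp hA)
  exact h b p (mem_childPart.2 hp)

theorem ext_childPart (hA : [] ∉ A) (hB : [] ∉ B) (h : ∀ b, childPart b A = childPart b B) :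
    A = B := by
  ext (_ | ⟨b, p⟩)
  · exact iff_of_false hA hB
  · rw [← mem_childPart, h b, mem_childPart]

theorem configLE_iff_childPart (hA : [] ∉ A) (hB : [] ∉ B) :
    ConfigLE A B ↔ ∀ b, ConfigLE (childPart b A) (childPart b B) := by
  rw [ConfigLE, forall_mem_iff_childPart hA]
  refine forall_congr' fun b => forall₂_congr fun p _ => ⟨fun ⟨q, hq, hqp⟩ => ?_, ?_⟩
  · obtain ⟨q, rfl⟩ : ∃ q', q = b :: q' := by
      rcases prefix_cons_iff.1 hqp with rfl | ⟨q', rfl, -⟩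
      exacts [absurd hq hB, ⟨q', rfl⟩]
    exact ⟨q, mem_childPart.2 hq, (cons_prefix_cons.1 hqp).2⟩
  · rintro ⟨q, hq, hqp⟩
    exact ⟨b :: q, mem_childPart.1 hq, cons_prefix_cons.2 ⟨rfl, hqp⟩⟩

theorem existsUnique_prefix_cons_iff (hA : [] ∉ A) {b : Bool} {q : Pos} :
    (∃! p, p ∈ A ∧ p <+: b :: q) ↔ ∃! p, p ∈ childPart b A ∧ p <+: q := by
  have hcons : ∀ p ∈ A, p <+: b :: q → ∃ p', p = b :: p' ∧ p' <+: q := fun p hp hpq =>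
    (prefix_cons_iff.1 hpq).resolve_left (ne_of_mem_of_not_mem hp hA)
  constructor
  · rintro ⟨p, ⟨hp, hpq⟩, huniq⟩
    obtain ⟨p, rfl, hp_pre⟩ := hcons p hp hpq
    refine ⟨p, ⟨mem_childPart.2 hp, hp_pre⟩, fun p' ⟨hp', hp'q⟩ => ?_⟩
    exact (cons_injective (huniq _ ⟨mem_childPart.1 hp', cons_prefix_cons.2 ⟨rfl, hp'q⟩⟩))
  · rintro ⟨p, ⟨hp, hpq⟩, huniq⟩
    refine ⟨b :: p, ⟨mem_childPart.1 hp, cons_prefix_cons.2 ⟨rfl, hpq⟩⟩,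
      fun p' ⟨hp', hp'q⟩ => ?_⟩
    obtain ⟨p', rfl, hp'_pre⟩ := hcons p' hp' hp'q
    rw [huniq p' ⟨mem_childPart.2 hp', hp'_pre⟩]

end NilNotMem

theorem isConfig_node_iff {l r : BTree} {A : Finset Pos} :
    IsConfig (node l r) A ↔ [] ∉ A ∧ ∀ b, IsAncConfig (cond b r l) (childPart b A) := by
  constructor
  · rintro ⟨hvalid, hleaves⟩
    have hnil : [] ∉ A := fun h => (hvalid [] h).2 rfl
    refine ⟨hnil, fun b => ⟨fun p hp => ?_, fun q hq => ?_⟩⟩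
    · exact isValidPos_node_cons.1 (hvalid _ (mem_childPart.1 hp)).1
    · exact (existsUnique_prefix_cons_iff hnil).1 (forall_mem_leafPositions_node.1 hleaves b q hq)
  · rintro ⟨hnil, hsides⟩
    refine ⟨(forall_mem_iff_childPart hnil).2 fun b p hp => ?_, ?_⟩
    · exact ⟨isValidPos_node_cons.2 ((hsides b).1 p hp), cons_ne_nil _ _⟩
    · exact forall_mem_leafPositions_node.2 fun b q hq =>
        (existsUnique_prefix_cons_iff hnil).2 ((hsides b).2 q hq)

def joinSides (s t : Finset Pos) : Finset Pos :=
  s.image (false :: ·) ∪ t.image (true :: ·)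

theorem nil_not_mem_joinSides {s t : Finset Pos} : [] ∉ joinSides s t := by
  simp [joinSides]

@[simp]
theorem childPart_false_joinSides {s t : Finset Pos} : childPart false (joinSides s t) = s := by
  ext; simp [joinSides]

@[simp]
theorem childPart_true_joinSides {s t : Finset Pos} : childPart true (joinSides s t) = t := by
  ext; simp [joinSides]

namespace Cfg

variable {l r : BTree}

def glue (x : WithTop (Cfg l)) (y : WithTop (Cfg r)) : Cfg (node l r) :=
  ⟨joinSides (carrier x) (carrier y), isConfig_node_iff.2 ⟨nil_not_mem_joinSides,
    Bool.forall_bool.2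
      ⟨by simpa using isAncConfig_carrier x, by simpa using isAncConfig_carrier y⟩⟩⟩

theorem glue_le_glue_iff {x x' : WithTop (Cfg l)} {y y' : WithTop (Cfg r)} :
    glue x y ≤ glue x' y' ↔ x ≤ x' ∧ y ≤ y' := by
  change ConfigLE (joinSides _ _) (joinSides _ _) ↔ _
  rw [configLE_iff_childPart nil_not_mem_joinSides nil_not_mem_joinSides, Bool.forall_bool]
  simp only [childPart_false_joinSides, childPart_true_joinSides, configLE_carrier_iff]

theorem glue_surjective : Function.Surjective fun z : WithTop (Cfg l) × WithTop (Cfg r) =>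
    glue z.1 z.2 := by
  intro A
  obtain ⟨hnil, hsides⟩ := isConfig_node_iff.1 A.2
  obtain ⟨x, hx⟩ := exists_carrier_eq (T := l) (hsides false)
  obtain ⟨y, hy⟩ := exists_carrier_eq (T := r) (hsides true)
  refine ⟨(x, y), Subtype.ext (ext_childPart nil_not_mem_joinSides hnil ?_)⟩
  rintro (_ | _)
  exacts [childPart_false_joinSides.trans hx, childPart_true_joinSides.trans hy]

noncomputable def nodeOrderIso (l r : BTree) :
    WithTop (Cfg l) × WithTop (Cfg r) ≃o Cfg (node l r) :=
  OrderIso.ofSurjective (OrderEmbedding.ofMapLEIff _ fun _ _ => glue_le_glue_iff) glue_surjective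

theorem isTop_of_isMax : ∀ {T : BTree} {A : Cfg T}, IsMax A → IsTop A
  | leaf, A, _ => (not_isConfig_leaf A.1 A.2).elim
  | node l r, A, hA => by
    have htop : IsTop (nodeOrderIso l r ⊤) := fun B => (nodeOrderIso l r).symm_apply_le.1 le_top
    exact fun B => (htop B).trans (hA (htop A))

end Cfg

theorem hatEdge_iff_covBy {T : BTree} : ∀ {x y : WithTop (Cfg T)}, hatEdge T x y ↔ x ⋖ y
  | ⊤, _ => iff_of_false id not_top_covBy
  | (A : Cfg T), ⊤ => by
    rw [WithTop.coe_covBy_top]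
    exact ⟨fun h => IsTop.isMax fun B => h B.1 B.2,
      fun h B hB => Cfg.isTop_of_isMax h ⟨B, hB⟩⟩
  | (A : Cfg T), (B : Cfg T) => by
    rw [WithTop.coe_covBy_coe]
    exact covers_iff_covBy

end BTree

/-- The Hasse digraph of the lattice of root ancestral configurations of
`S = node l r` is isomorphic to the cartesian product of digraphs
`D̂(S_ℓ) □ D̂(S_r)`: there is a bijection of vertex sets under which `Y` covers `X`
in `D(S)` iff the images are joined by an edge of the cartesian product. -/
theorem hasse_digraph_decomposition (l r : BTree) :
    ∃ e : {A : Finset Pos // IsConfig (node l r) A} ≃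
        Option {A : Finset Pos // IsConfig l A} ×
        Option {A : Finset Pos // IsConfig r A},
      ∀ X Y, Covers (node l r) X.val Y.val ↔
        (((e X).1 = (e Y).1 ∧ hatEdge r (e X).2 (e Y).2) ∨
         ((e X).2 = (e Y).2 ∧ hatEdge l (e X).1 (e Y).1)) := by
  let e := (Cfg.nodeOrderIso l r).symm
  refine ⟨e.toEquiv, fun (X Y : Cfg (node l r)) => ?_⟩
  calc Covers (node l r) X.1 Y.1 ↔ X ⋖ Y := covers_iff_covBy
    _ ↔ e X ⋖ e Y := (apply_covBy_apply_iff e).symm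
    _ ↔ ((e X).1 = (e Y).1 ∧ (e X).2 ⋖ (e Y).2) ∨
        ((e X).2 = (e Y).2 ∧ (e X).1 ⋖ (e Y).1) :=
      Prod.covBy_iff.trans (or_comm.trans (or_congr and_comm and_comm))
    _ ↔ _ := or_congr (and_congr_right' hatEdge_iff_covBy.symm)
      (and_congr_right' hatEdge_iff_covBy.symm)
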